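/- arXiv:1705.09459 — 2 statements merged into one kernel-verified Lean document; each statement's English description precedes it below -/
import Mathlib

section
/- For each n ≥ 1 and all real x, q_{2n-1}(x) = (-1)^n · (1+x²)^{n-1/2} · x · U_{2n-1}(1/√(1+x²)), where U_m denotes the m-th Chebyshev polynomial of the second kind. -/
open Finset Polynomial Real

noncomputable def q (n : ℕ) (x : ℝ) : ℝ :=
  (-1 : ℝ)^n * ∑ k ∈ (Finset.range (n+1)).filter (fun k => Even k),
    ((n+1).choose (k+1) : ℝ) * (-1 : ℝ)^(k/2) * x^(n-k)

/-! Up to sign, `q m x` is the imaginary part of `(x + i) ^ (m + 1)`, and for odd `m = 2n - 1`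
that is, up to sign again, `Im (1 + x i) ^ (2n)`. Writing `1 + x i = √(1 + x²) (cos θ + i sin θ)`
with `θ = arctan x`, de Moivre gives `Im (1 + x i) ^ (2n) = (1 + x²) ^ n sin (2nθ)`, and
`sin (2nθ) = U_{2n-1} (cos θ) sin θ` with `cos θ = 1 / √(1 + x²)`, `sin θ = x / √(1 + x²)`. -/

namespace Complex

open scoped ComplexConjugate

lemma im_I_pow_succ (k : ℕ) :
    (I ^ (k + 1)).im = if Even k then (-1 : ℝ) ^ (k / 2) else 0 := by
  obtain ⟨l, rfl | rfl⟩ := Nat.even_or_odd' k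
  · rw [if_pos (even_two_mul l), pow_succ, pow_mul, I_sq, mul_I_im,
      Nat.mul_div_cancel_left l two_pos]
    norm_cast
  · rw [if_neg (Nat.not_even_iff_odd.mpr (odd_two_mul_add_one l)), pow_succ, pow_succ, pow_mul,
      I_sq, mul_assoc, I_mul_I, mul_neg_one, neg_im]
    norm_cast
    exact neg_zero

lemma im_ofReal_add_I_pow_two_mul (n : ℕ) (x : ℝ) :
    ((x + I) ^ (2 * n)).im = -(-1) ^ n * ((1 + x * I) ^ (2 * n)).im := by
  have h : (x : ℂ) + I = I * conj (1 + x * I) := by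
    apply Complex.ext <;> simp
  rw [h, mul_pow, pow_mul, I_sq, ← map_pow, ← ofReal_one, ← ofReal_neg, ← ofReal_pow,
    im_ofReal_mul, conj_im]
  ring

lemma im_one_add_mul_I_pow_succ (m : ℕ) (x : ℝ) :
    ((1 + x * I) ^ (m + 1)).im =
      √(1 + x ^ 2) ^ m * x * (Chebyshev.U ℝ m).eval (1 / √(1 + x ^ 2)) := by
  set θ := Real.arctan x
  have hs : √(1 + x ^ 2) ≠ 0 := (Real.sqrt_pos.mpr (by positivity)).ne'
  have hpolar : 1 + x * I = √(1 + x ^ 2) * (cos θ + sin θ * I) := by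
    rw [← ofReal_cos, ← ofReal_sin, cos_arctan, sin_arctan]
    push_cast
    field_simp [ofReal_ne_zero.mpr hs]
  have hU := Chebyshev.U_real_cos θ m
  rw [cos_arctan, sin_arctan] at hU
  push_cast at hU
  rw [hpolar, mul_pow, cos_add_sin_mul_I_pow, ← ofReal_pow, im_ofReal_mul]
  push_cast
  rw [← ofReal_natCast, ← ofReal_one, ← ofReal_add, ← ofReal_mul, ← ofReal_sin, ← ofReal_cos,
    add_im, ofReal_im, zero_add, mul_I_im, ofReal_re, ← hU]
  field_simp
  ring

end Complex

open Complex in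
lemma q_eq_neg_one_pow_mul_im (m : ℕ) (x : ℝ) :
    q m x = (-1) ^ m * (((x : ℂ) + I) ^ (m + 1)).im := by
  rw [q, add_comm (x : ℂ), add_pow, sum_range_succ', add_im, Complex.im_sum, sum_filter]
  simp only [← ofReal_pow, ← ofReal_natCast, mul_assoc, ← ofReal_mul, im_mul_ofReal,
    im_I_pow_succ, pow_zero, one_im, zero_mul, add_zero, Nat.add_sub_add_right, ite_mul]
  congr 1
  refine sum_congr rfl fun k _ => ?_
  split_ifs <;> ring

theorem q_odd_chebyshevU (n : ℕ) (hn : 1 ≤ n) (x : ℝ) :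
    q (2 * n - 1) x = (-1 : ℝ)^n * ((1 + x^2)^(n-1) * Real.sqrt (1 + x^2)) * x *
      (Polynomial.Chebyshev.U ℝ (2 * n - 1)).eval (1 / Real.sqrt (1 + x^2)) := by
  obtain ⟨m, rfl⟩ := Nat.exists_eq_add_of_le' hn
  have hq : 2 * (m + 1) - 1 = 2 * m + 1 := by omega
  have hU : 2 * ((m + 1 : ℕ) : ℤ) - 1 = ((2 * m + 1 : ℕ) : ℤ) := by push_cast; ring
  have hsqrt : √(1 + x ^ 2) ^ (2 * m + 1) = (1 + x ^ 2) ^ m * √(1 + x ^ 2) := by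
    rw [pow_succ, pow_mul, sq_sqrt (by positivity)]
  rw [hq, hU, q_eq_neg_one_pow_mul_im, show 2 * m + 1 + 1 = 2 * (m + 1) by ring,
    Complex.im_ofReal_add_I_pow_two_mul, show 2 * (m + 1) = 2 * m + 1 + 1 by ring,
    Complex.im_one_add_mul_I_pow_succ, hsqrt, add_tsub_cancel_right,
    (odd_two_mul_add_one m).neg_one_pow]
  ring
end

section
/- For each n ≥ 1 and all real x, the n-th derivative of arctan at x equals (n-1)! · (-1)^{n-1} · sin(n · arccot(x)) / (1+x²)^{n/2}, where arccot(x) = π/2 - arctan(x). -/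
open Finset Polynomial Real

noncomputable def arccot (x : ℝ) : ℝ := Real.pi / 2 - Real.arctan x

/-!
With `θ = arccot x` one has `sin θ = 1 / √(1 + x²)` and `θ' = -sin² θ`. Since
`d/dθ (sin (kθ) sin^k θ) = k sin ((k+1)θ) sin^(k-1) θ`, differentiating
`sin (kθ) sin^k θ` in `x` gives `-k sin ((k+1)θ) sin^(k+1) θ`, and induction on `n` yields
`arctan⁽ⁿ⁾ x = (-1)^(n-1) (n-1)! sin (nθ) sin^n θ`.
-/

lemma sqrt_pow_of_nonneg {a : ℝ} (ha : 0 ≤ a) (n : ℕ) : √(a ^ n) = √a ^ n := by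
  rw [← sqrt_sq (pow_nonneg (sqrt_nonneg a) n), ← pow_mul, mul_comm, pow_mul, sq_sqrt ha]

lemma sin_arccot (x : ℝ) : sin (arccot x) = (√(1 + x ^ 2))⁻¹ := by
  rw [arccot, sin_pi_div_two_sub, cos_arctan, one_div]

lemma sin_arccot_sq (x : ℝ) : sin (arccot x) ^ 2 = (1 + x ^ 2)⁻¹ := by
  rw [sin_arccot, inv_pow, sq_sqrt (by positivity)]

lemma hasDerivAt_arccot (x : ℝ) : HasDerivAt arccot (-sin (arccot x) ^ 2) x := by
  rw [sin_arccot_sq, ← one_div]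
  exact (hasDerivAt_arctan x).const_sub (π / 2)

lemma hasDerivAt_sin_mul_mul_sin_pow (k : ℕ) (t : ℝ) :
    HasDerivAt (fun t => sin ((k + 1) * t) * sin t ^ (k + 1))
      ((k + 1) * sin ((k + 2) * t) * sin t ^ k) t := by
  have hsin : HasDerivAt (fun t => sin ((k + 1) * t)) (cos ((k + 1) * t) * (k + 1)) t := by
    simpa using ((hasDerivAt_id t).const_mul ((k : ℝ) + 1)).sin
  have hpow : HasDerivAt (fun t => sin t ^ (k + 1)) ((k + 1 : ℕ) * sin t ^ k * cos t) t := by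
    simpa using (hasDerivAt_sin t).fun_pow (k + 1)
  have hadd : sin ((k + 2) * t) = sin ((k + 1) * t) * cos t + cos ((k + 1) * t) * sin t := by
    rw [← sin_add]
    congr 1
    ring
  refine (hsin.mul hpow).congr_deriv ?_
  rw [hadd]
  push_cast
  ring

lemma hasDerivAt_sin_mul_arccot_mul_sin_arccot_pow (k : ℕ) (x : ℝ) :
    HasDerivAt (fun x => sin ((k + 1) * arccot x) * sin (arccot x) ^ (k + 1))
      (-(k + 1) * (sin ((k + 2) * arccot x) * sin (arccot x) ^ (k + 2))) x :=
  ((hasDerivAt_sin_mul_mul_sin_pow k (arccot x)).comp x (hasDerivAt_arccot x)).congr_deriv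
    (by ring)

lemma iteratedDeriv_succ_arctan (n : ℕ) :
    iteratedDeriv (n + 1) arctan =
      fun x => (-1) ^ n * n.factorial * (sin ((n + 1) * arccot x) * sin (arccot x) ^ (n + 1)) := by
  induction n with
  | zero =>
    ext x
    rw [iteratedDeriv_one, Real.deriv_arctan]
    simp [← sq, sin_arccot_sq]
  | succ n ih =>
    ext x
    rw [iteratedDeriv_succ, ih]
    have hd := (hasDerivAt_sin_mul_arccot_mul_sin_arccot_pow n x).const_mul
      ((-1 : ℝ) ^ n * n.factorial)
    rw [hd.deriv, Nat.factorial_succ]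
    push_cast
    rw [show (n : ℝ) + 1 + 1 = n + 2 by ring]
    ring

theorem arctan_deriv_trig (n : ℕ) (hn : 1 ≤ n) (x : ℝ) :
    iteratedDeriv n Real.arctan x =
      (n - 1).factorial * ((-1 : ℝ)^(n-1) * Real.sin (n * arccot x)) /
        Real.sqrt ((1 + x^2)^n) := by
  obtain ⟨m, rfl⟩ := Nat.exists_eq_add_of_le' hn
  rw [iteratedDeriv_succ_arctan]
  dsimp only
  rw [sin_arccot, sqrt_pow_of_nonneg (by positivity)]
  simp only [Nat.add_sub_cancel]
  push_cast
  ring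
end
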